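/- arXiv:math/0406611 — 2 statements merged into one kernel-verified Lean document; each statement's English description precedes it below -/
import Mathlib

section
/- If π₁ is a Poisson bivector on a manifold P₁ with Casimir function f₁, and π₂ is a Poisson bivector on a manifold P₂ with Casimir function f₂, then the bivector f₂π₁ + f₁π₂ on the product P₁ × P₂ (where f₁, f₂, π₁, π₂ are pulled back to the product) satisfies the Jacobi identity, i.e. its Schouten bracket with itself vanishes: [f₂π₁ + f₁π₂, f₂π₁ + f₁π₂] = 0. -/
/-! Statement 0: Casimir-weighted product.  We work in coordinates: P₁ = ℝⁿ,
P₂ = ℝᵐ, with bivectors given by antisymmetric component functions.  If π₁ is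
Poisson with Casimir f₁ and π₂ is Poisson with Casimir f₂, then on P₁ × P₂ the
bivector f₂π₁ + f₁π₂ (all pulled back) has vanishing Schouten self-bracket. -/

noncomputable def pd {N : ℕ} (f : (Fin N → ℝ) → ℝ) (i : Fin N) (x : Fin N → ℝ) : ℝ :=
  fderiv ℝ f x (Pi.single i 1)

/-- Schouten bracket `[L,L]` of a bivector in coordinates on ℝᴺ. -/
noncomputable def schouten {N : ℕ} (L : Fin N → Fin N → (Fin N → ℝ) → ℝ)
    (i j k : Fin N) (x : Fin N → ℝ) : ℝ :=
  2 * ∑ l, (L l i x * pd (L j k) l x + L l j x * pd (L k i) l x + L l k x * pd (L i j) l x)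

section Product

variable (n m : ℕ)

/-- The product manifold ℝⁿ × ℝᵐ. -/
abbrev ProdSp (n m : ℕ) := ((Fin n → ℝ) × (Fin m → ℝ))

/-- The coordinate directions on the product. -/
def coordVec (n m : ℕ) : Fin n ⊕ Fin m → ProdSp n m :=
  Sum.elim (fun i => (Pi.single i 1, 0)) (fun j => (0, Pi.single j 1))

/-- Partial derivative on the product along the `a`-th coordinate direction. -/
noncomputable def pdP (f : ProdSp n m → ℝ) (a : Fin n ⊕ Fin m) (x : ProdSp n m) : ℝ :=
  fderiv ℝ f x (coordVec n m a)

/-- Schouten bracket of a bivector on the product ℝⁿ × ℝᵐ. -/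
noncomputable def schoutenP (L : Fin n ⊕ Fin m → Fin n ⊕ Fin m → ProdSp n m → ℝ)
    (a b c : Fin n ⊕ Fin m) (x : ProdSp n m) : ℝ :=
  2 * ∑ l, (L l a x * pdP n m (L b c) l x + L l b x * pdP n m (L c a) l x
      + L l c x * pdP n m (L a b) l x)

/-- The Casimir-weighted product bivector `f₂π₁ + f₁π₂` on ℝⁿ × ℝᵐ:
the pullback of `π₁` weighted by the pullback of `f₂`, plus the pullback of
`π₂` weighted by the pullback of `f₁`. -/
def weightedProd (π₁ : Fin n → Fin n → (Fin n → ℝ) → ℝ)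
    (π₂ : Fin m → Fin m → (Fin m → ℝ) → ℝ)
    (f₁ : (Fin n → ℝ) → ℝ) (f₂ : (Fin m → ℝ) → ℝ) :
    Fin n ⊕ Fin m → Fin n ⊕ Fin m → ProdSp n m → ℝ := fun a b x =>
  match a, b with
  | Sum.inl i, Sum.inl j => f₂ x.2 * π₁ i j x.1
  | Sum.inr i, Sum.inr j => f₁ x.1 * π₂ i j x.2
  | _, _ => 0

/-! ### Auxiliary lemmas -/

lemma fderiv_pullmul (g : (Fin n → ℝ) → ℝ) (h : (Fin m → ℝ) → ℝ)
    (hg : ContDiff ℝ (⊤ : ℕ∞) g) (hh : ContDiff ℝ (⊤ : ℕ∞) h) (x : ProdSp n m) (v : ProdSp n m) :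
    fderiv ℝ (fun x : ProdSp n m => g x.1 * h x.2) x v =
      fderiv ℝ g x.1 v.1 * h x.2 + g x.1 * fderiv ℝ h x.2 v.2 := by
  have Hg : HasFDerivAt (fun x : ProdSp n m => g x.1)
      ((fderiv ℝ g x.1).comp (ContinuousLinearMap.fst ℝ _ _)) x :=
    ((hg.differentiable (by simp) x.1).hasFDerivAt).comp x (hasFDerivAt_fst)
  have Hh : HasFDerivAt (fun x : ProdSp n m => h x.2)
      ((fderiv ℝ h x.2).comp (ContinuousLinearMap.snd ℝ _ _)) x :=
    ((hh.differentiable (by simp) x.2).hasFDerivAt).comp x (hasFDerivAt_snd)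
  rw [(Hg.fun_mul Hh).fderiv]
  simp
  ring

lemma pdP_mul₁ (g : (Fin n → ℝ) → ℝ) (h : (Fin m → ℝ) → ℝ)
    (hg : ContDiff ℝ (⊤ : ℕ∞) g) (hh : ContDiff ℝ (⊤ : ℕ∞) h) (a : Fin n ⊕ Fin m) (x : ProdSp n m) :
    pdP n m (fun x => g x.1 * h x.2) a x =
      Sum.elim (fun i => pd g i x.1 * h x.2) (fun j => g x.1 * pd h j x.2) a := by
  cases a <;>
    simp [pdP, coordVec, pd, fderiv_pullmul n m g h hg hh]

lemma pdP_mul₂ (g : (Fin m → ℝ) → ℝ) (h : (Fin n → ℝ) → ℝ)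
    (hg : ContDiff ℝ (⊤ : ℕ∞) g) (hh : ContDiff ℝ (⊤ : ℕ∞) h) (a : Fin n ⊕ Fin m) (x : ProdSp n m) :
    pdP n m (fun x => g x.2 * h x.1) a x =
      Sum.elim (fun i => g x.2 * pd h i x.1) (fun j => pd g j x.2 * h x.1) a := by
  have e : ∀ x : ProdSp n m, g x.2 * h x.1 = h x.1 * g x.2 := fun _ => mul_comm _ _
  simp only [e, pdP_mul₁ n m h g hh hg]
  cases a <;> simp [mul_comm]

lemma pdP_zero (a : Fin n ⊕ Fin m) (x : ProdSp n m) :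
    pdP n m (fun _ => (0:ℝ)) a x = 0 := by
  simp [pdP]

lemma schoutenP_cyc (L : Fin n ⊕ Fin m → Fin n ⊕ Fin m → ProdSp n m → ℝ)
    (a b c : Fin n ⊕ Fin m) (x : ProdSp n m) :
    schoutenP n m L a b c x = schoutenP n m L b c a x := by
  unfold schoutenP
  congr 1
  apply Finset.sum_congr rfl
  intros; ring

section Cases

variable (π₁ : Fin n → Fin n → (Fin n → ℝ) → ℝ) (π₂ : Fin m → Fin m → (Fin m → ℝ) → ℝ)
    (f₁ : (Fin n → ℝ) → ℝ) (f₂ : (Fin m → ℝ) → ℝ)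

lemma wp_ll (i j : Fin n) : weightedProd n m π₁ π₂ f₁ f₂ (Sum.inl i) (Sum.inl j)
    = fun x => f₂ x.2 * π₁ i j x.1 := rfl

lemma wp_rr (i j : Fin m) : weightedProd n m π₁ π₂ f₁ f₂ (Sum.inr i) (Sum.inr j)
    = fun x => f₁ x.1 * π₂ i j x.2 := rfl

lemma wp_lr (i : Fin n) (j : Fin m) : weightedProd n m π₁ π₂ f₁ f₂ (Sum.inl i) (Sum.inr j)
    = fun _ => 0 := rfl

lemma wp_rl (i : Fin m) (j : Fin n) : weightedProd n m π₁ π₂ f₁ f₂ (Sum.inr i) (Sum.inl j)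
    = fun _ => 0 := rfl

variable (hπ₁ : ∀ i j, ContDiff ℝ (⊤ : ℕ∞) (π₁ i j)) (hπ₂ : ∀ i j, ContDiff ℝ (⊤ : ℕ∞) (π₂ i j))
    (hf₁ : ContDiff ℝ (⊤ : ℕ∞) f₁) (hf₂ : ContDiff ℝ (⊤ : ℕ∞) f₂)

include hπ₁ hf₂ in
lemma case_lll (hJac₁ : ∀ i j k x, schouten π₁ i j k x = 0) (i j k : Fin n) (x : ProdSp n m) :
    schoutenP n m (weightedProd n m π₁ π₂ f₁ f₂) (Sum.inl i) (Sum.inl j) (Sum.inl k) x = 0 := by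
  unfold schoutenP
  rw [Fintype.sum_sum_type]
  simp only [wp_ll, wp_rl, pdP_mul₂ n m f₂ _ hf₂ (hπ₁ _ _), Sum.elim_inl, Sum.elim_inr,
    zero_mul, add_zero, Finset.sum_const_zero]
  have h := hJac₁ i j k x.1
  unfold schouten at h
  have hs : ∑ l : Fin n, (f₂ x.2 * π₁ l i x.1 * (f₂ x.2 * pd (π₁ j k) l x.1)
      + f₂ x.2 * π₁ l j x.1 * (f₂ x.2 * pd (π₁ k i) l x.1)
      + f₂ x.2 * π₁ l k x.1 * (f₂ x.2 * pd (π₁ i j) l x.1))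
      = f₂ x.2 * f₂ x.2 * ∑ l : Fin n, (π₁ l i x.1 * pd (π₁ j k) l x.1
      + π₁ l j x.1 * pd (π₁ k i) l x.1 + π₁ l k x.1 * pd (π₁ i j) l x.1) := by
    rw [Finset.mul_sum]
    exact Finset.sum_congr rfl fun _ _ => by ring
  rw [hs]
  nlinarith [h]

include hπ₂ hf₁ in
lemma case_rrr (hJac₂ : ∀ i j k x, schouten π₂ i j k x = 0) (i j k : Fin m) (x : ProdSp n m) :
    schoutenP n m (weightedProd n m π₁ π₂ f₁ f₂) (Sum.inr i) (Sum.inr j) (Sum.inr k) x = 0 := by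
  unfold schoutenP
  rw [Fintype.sum_sum_type]
  simp only [wp_rr, wp_lr, pdP_mul₁ n m f₁ _ hf₁ (hπ₂ _ _), Sum.elim_inl, Sum.elim_inr,
    zero_mul, add_zero, zero_add, Finset.sum_const_zero]
  have h := hJac₂ i j k x.2
  unfold schouten at h
  have hs : ∑ l : Fin m, (f₁ x.1 * π₂ l i x.2 * (f₁ x.1 * pd (π₂ j k) l x.2)
      + f₁ x.1 * π₂ l j x.2 * (f₁ x.1 * pd (π₂ k i) l x.2)
      + f₁ x.1 * π₂ l k x.2 * (f₁ x.1 * pd (π₂ i j) l x.2))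
      = f₁ x.1 * f₁ x.1 * ∑ l : Fin m, (π₂ l i x.2 * pd (π₂ j k) l x.2
      + π₂ l j x.2 * pd (π₂ k i) l x.2 + π₂ l k x.2 * pd (π₂ i j) l x.2) := by
    rw [Finset.mul_sum]
    exact Finset.sum_congr rfl fun _ _ => by ring
  rw [hs]
  nlinarith [h]

include hπ₁ hf₂ in
lemma case_llr (hCas₂ : ∀ j x, ∑ i, π₂ i j x * pd f₂ i x = 0)
    (i j : Fin n) (k : Fin m) (x : ProdSp n m) :
    schoutenP n m (weightedProd n m π₁ π₂ f₁ f₂) (Sum.inl i) (Sum.inl j) (Sum.inr k) x = 0 := by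
  unfold schoutenP
  rw [Fintype.sum_sum_type]
  simp only [wp_ll, wp_lr, wp_rl, wp_rr, pdP_zero, pdP_mul₂ n m f₂ _ hf₂ (hπ₁ _ _),
    Sum.elim_inl, Sum.elim_inr, mul_zero, zero_mul, add_zero, zero_add, Finset.sum_const_zero]
  have h := hCas₂ k x.2
  have hs : ∑ l : Fin m, f₁ x.1 * π₂ l k x.2 * (pd f₂ l x.2 * π₁ i j x.1)
      = f₁ x.1 * π₁ i j x.1 * ∑ l : Fin m, π₂ l k x.2 * pd f₂ l x.2 := by
    rw [Finset.mul_sum]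
    exact Finset.sum_congr rfl fun _ _ => by ring
  rw [hs, h]
  ring

include hπ₂ hf₁ in
lemma case_lrr (hCas₁ : ∀ j x, ∑ i, π₁ i j x * pd f₁ i x = 0)
    (i : Fin n) (j k : Fin m) (x : ProdSp n m) :
    schoutenP n m (weightedProd n m π₁ π₂ f₁ f₂) (Sum.inl i) (Sum.inr j) (Sum.inr k) x = 0 := by
  unfold schoutenP
  rw [Fintype.sum_sum_type]
  simp only [wp_ll, wp_lr, wp_rl, wp_rr, pdP_zero, pdP_mul₁ n m f₁ _ hf₁ (hπ₂ _ _),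
    Sum.elim_inl, Sum.elim_inr, mul_zero, zero_mul, add_zero, zero_add, Finset.sum_const_zero]
  have h := hCas₁ i x.1
  have hs : ∑ l : Fin n, f₂ x.2 * π₁ l i x.1 * (pd f₁ l x.1 * π₂ j k x.2)
      = f₂ x.2 * π₂ j k x.2 * ∑ l : Fin n, π₁ l i x.1 * pd f₁ l x.1 := by
    rw [Finset.mul_sum]
    exact Finset.sum_congr rfl fun _ _ => by ring
  rw [hs, h]
  ring

end Cases

theorem statement0
    (π₁ : Fin n → Fin n → (Fin n → ℝ) → ℝ) (π₂ : Fin m → Fin m → (Fin m → ℝ) → ℝ)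
    (f₁ : (Fin n → ℝ) → ℝ) (f₂ : (Fin m → ℝ) → ℝ)
    (hπ₁ : ∀ i j, ContDiff ℝ (⊤ : ℕ∞) (π₁ i j)) (hπ₂ : ∀ i j, ContDiff ℝ (⊤ : ℕ∞) (π₂ i j))
    (hf₁ : ContDiff ℝ (⊤ : ℕ∞) f₁) (hf₂ : ContDiff ℝ (⊤ : ℕ∞) f₂)
    (hskew₁ : ∀ i j x, π₁ i j x = - π₁ j i x) (hskew₂ : ∀ i j x, π₂ i j x = - π₂ j i x)
    -- π₁, π₂ are Poisson bivectors:
    (hJac₁ : ∀ i j k x, schouten π₁ i j k x = 0)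
    (hJac₂ : ∀ i j k x, schouten π₂ i j k x = 0)
    -- f₁ is a Casimir of π₁, f₂ is a Casimir of π₂ (πᵢ(dfᵢ, ·) = 0):
    (hCas₁ : ∀ j x, ∑ i, π₁ i j x * pd f₁ i x = 0)
    (hCas₂ : ∀ j x, ∑ i, π₂ i j x * pd f₂ i x = 0) :
    ∀ a b c x, schoutenP n m (weightedProd n m π₁ π₂ f₁ f₂) a b c x = 0 := by
  intro a b c x
  rcases a with i | i <;> rcases b with j | j <;> rcases c with k | k
  · exact case_lll n m π₁ π₂ f₁ f₂ hπ₁ hf₂ hJac₁ i j k x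
  · exact case_llr n m π₁ π₂ f₁ f₂ hπ₁ hf₂ hCas₂ i j k x
  · rw [schoutenP_cyc, schoutenP_cyc]
    exact case_llr n m π₁ π₂ f₁ f₂ hπ₁ hf₂ hCas₂ k i j x
  · exact case_lrr n m π₁ π₂ f₁ f₂ hπ₂ hf₁ hCas₁ i j k x
  · rw [schoutenP_cyc]
    exact case_llr n m π₁ π₂ f₁ f₂ hπ₁ hf₂ hCas₂ j k i x
  · rw [schoutenP_cyc]
    exact case_lrr n m π₁ π₂ f₁ f₂ hπ₂ hf₁ hCas₁ j k i x
  · rw [schoutenP_cyc, schoutenP_cyc]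
    exact case_lrr n m π₁ π₂ f₁ f₂ hπ₂ hf₁ hCas₁ k i j x
  · exact case_rrr n m π₁ π₂ f₁ f₂ hπ₂ hf₁ hJac₂ i j k x


end Product
end

section
/- Let Λ be a bivector field on M. Then for all 1-forms α, β: Λ♯(L_{Λ♯α}β − L_{Λ♯β}α − d(Λ(α,β))) = [Λ♯α, Λ♯β] + (1/2)[Λ,Λ](α,β,·)♯, i.e. the Koszul bracket of 1-forms is mapped by Λ♯ to the Lie bracket of the corresponding Hamiltonian-type vector fields up to the Schouten-bracket defect term. -/
def biEval {N : ℕ} (L : Fin N → Fin N → (Fin N → ℝ) → ℝ)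
    (a b : Fin N → (Fin N → ℝ) → ℝ) (x : Fin N → ℝ) : ℝ :=
  ∑ i, ∑ j, L i j x * a i x * b j x

def sharp {N : ℕ} (L : Fin N → Fin N → (Fin N → ℝ) → ℝ)
    (a : Fin N → (Fin N → ℝ) → ℝ) (j : Fin N) (x : Fin N → ℝ) : ℝ :=
  ∑ i, L i j x * a i x

noncomputable def lieVF {N : ℕ} (X Y : Fin N → (Fin N → ℝ) → ℝ) (i : Fin N)
    (x : Fin N → ℝ) : ℝ :=
  ∑ j, (X j x * pd (Y i) j x - Y j x * pd (X i) j x)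

/-- Lie derivative of a 1-form along a vector field:
`(L_X β)_i = ∑ j (X^j ∂_j β_i + β_j ∂_i X^j)`. -/
noncomputable def lieOneForm {N : ℕ} (X b : Fin N → (Fin N → ℝ) → ℝ) (i : Fin N)
    (x : Fin N → ℝ) : ℝ :=
  ∑ j, (X j x * pd (b i) j x + b j x * pd (X j) i x)

/-! ### Auxiliary lemmas -/

lemma pd_mul {N : ℕ} (f g : (Fin N → ℝ) → ℝ) (i : Fin N) (x : Fin N → ℝ)
    (hf : DifferentiableAt ℝ f x) (hg : DifferentiableAt ℝ g x) :
    pd (fun y => f y * g y) i x = pd f i x * g x + f x * pd g i x := by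
  simp only [pd, fderiv_fun_mul hf hg, ContinuousLinearMap.add_apply,
    ContinuousLinearMap.coe_smul', Pi.smul_apply, smul_eq_mul]
  ring

lemma pd_sum {N : ℕ} {ι : Type*} (s : Finset ι) (f : ι → (Fin N → ℝ) → ℝ) (i : Fin N)
    (x : Fin N → ℝ) (hf : ∀ j ∈ s, DifferentiableAt ℝ (f j) x) :
    pd (fun y => ∑ j ∈ s, f j y) i x = ∑ j ∈ s, pd (f j) i x := by
  simp only [pd, fderiv_fun_sum hf]
  simp

lemma sum_antisym {N : ℕ} (h : Fin N → Fin N → ℝ)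
    (H : ∀ i j, h i j + h j i = 0) : ∑ i, ∑ j, h i j = 0 := by
  have h2 : (∑ i, ∑ j, h i j) + (∑ i, ∑ j, h i j) = 0 := by
    nth_rewrite 2 [Finset.sum_comm]
    rw [← Finset.sum_add_distrib]
    simp only [← Finset.sum_add_distrib]
    simp [H]
  linarith

lemma sum_rot3 {N : ℕ} (f : Fin N → Fin N → Fin N → ℝ) :
    ∑ a, ∑ b, ∑ c, f a b c = ∑ c, ∑ a, ∑ b, f a b c := by
  calc ∑ a, ∑ b, ∑ c, f a b c = ∑ a, ∑ c, ∑ b, f a b c :=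
        Finset.sum_congr rfl (fun a _ => Finset.sum_comm)
    _ = ∑ c, ∑ a, ∑ b, f a b c := Finset.sum_comm

lemma pd_sharp {N : ℕ} (L : Fin N → Fin N → (Fin N → ℝ) → ℝ)
    (hL : ∀ i j, ContDiff ℝ (⊤ : ℕ∞) (L i j)) (f : Fin N → (Fin N → ℝ) → ℝ)
    (hf : ∀ i, ContDiff ℝ (⊤ : ℕ∞) (f i)) (j m : Fin N) (x : Fin N → ℝ) :
    pd (sharp L f j) m x = ∑ i, (pd (L i j) m x * f i x + L i j x * pd (f i) m x) := by
  have h : sharp L f j = fun y => ∑ i, L i j y * f i y := rfl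
  rw [h, pd_sum _ _ _ _ (fun i _ =>
    (((hL i j).differentiable (by simp)) x).fun_mul (((hf i).differentiable (by simp)) x))]
  exact Finset.sum_congr rfl fun i _ =>
    pd_mul _ _ _ _ (((hL i j).differentiable (by simp)) x) (((hf i).differentiable (by simp)) x)

lemma pd_biEval {N : ℕ} (L : Fin N → Fin N → (Fin N → ℝ) → ℝ)
    (hL : ∀ i j, ContDiff ℝ (⊤ : ℕ∞) (L i j)) (a b : Fin N → (Fin N → ℝ) → ℝ)
    (ha : ∀ i, ContDiff ℝ (⊤ : ℕ∞) (a i)) (hb : ∀ i, ContDiff ℝ (⊤ : ℕ∞) (b i)) (m : Fin N) (x : Fin N → ℝ) :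
    pd (biEval L a b) m x = ∑ i, ∑ j, (pd (L i j) m x * a i x * b j x
      + L i j x * pd (a i) m x * b j x + L i j x * a i x * pd (b j) m x) := by
  have h : biEval L a b = fun y => ∑ i, ∑ j, L i j y * a i y * b j y := rfl
  have hd : ∀ (i j : Fin N) (y : Fin N → ℝ),
      DifferentiableAt ℝ (fun y => L i j y * a i y * b j y) y := fun i j y =>
    ((((hL i j).differentiable (by simp)) y).mul (((ha i).differentiable (by simp)) y)).mul
      (((hb j).differentiable (by simp)) y)
  rw [h, pd_sum _ _ _ _ (fun i _ => DifferentiableAt.fun_sum (fun j _ => hd i j x))]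
  refine Finset.sum_congr rfl fun i _ => ?_
  rw [pd_sum _ _ _ _ (fun j _ => hd i j x)]
  refine Finset.sum_congr rfl fun j _ => ?_
  rw [pd_mul _ _ _ _ ((((hL i j).differentiable (by simp)) x).fun_mul
      (((ha i).differentiable (by simp)) x)) (((hb j).differentiable (by simp)) x),
    pd_mul _ _ _ _ (((hL i j).differentiable (by simp)) x) (((ha i).differentiable (by simp)) x)]
  ring

lemma key {N : ℕ} (Lx : Fin N → Fin N → ℝ) (dL : Fin N → Fin N → Fin N → ℝ)
    (A B : Fin N → ℝ) (dA dB : Fin N → Fin N → ℝ)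
    (hsk : ∀ i j, Lx i j = - Lx j i)
    (hdsk : ∀ i j m, dL i j m = - dL j i m) (k : Fin N) :
    ∑ m, Lx m k *
        ((∑ j, ((∑ i, Lx i j * A i) * dB m j + B j * ∑ i, (dL i j m * A i + Lx i j * dA i m)))
       - (∑ j, ((∑ i, Lx i j * B i) * dA m j + A j * ∑ i, (dL i j m * B i + Lx i j * dB i m)))
       - ∑ i, ∑ j, (dL i j m * A i * B j + Lx i j * dA i m * B j + Lx i j * A i * dB j m))
    = ∑ j, ((∑ i, Lx i j * A i) * ∑ i, (dL i k j * B i + Lx i k * dB i j)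
          - (∑ i, Lx i j * B i) * ∑ i, (dL i k j * A i + Lx i k * dA i j))
      + 1 / 2 * ∑ i, ∑ j,
          (2 * ∑ l, (Lx l i * dL j k l + Lx l j * dL k i l + Lx l k * dL i j l)) * A i * B j := by
  have stepA : ∀ m : Fin N,
      ((∑ j, ((∑ i, Lx i j * A i) * dB m j + B j * ∑ i, (dL i j m * A i + Lx i j * dA i m)))
       - (∑ j, ((∑ i, Lx i j * B i) * dA m j + A j * ∑ i, (dL i j m * B i + Lx i j * dB i m)))
       - ∑ i, ∑ j, (dL i j m * A i * B j + Lx i j * dA i m * B j + Lx i j * A i * dB j m))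
      = ∑ i, ∑ j, (Lx i j * A i * dB m j - Lx i j * B i * dA m j + dL i j m * A i * B j) := by
    intro m
    have e1 : (∑ j, ((∑ i, Lx i j * A i) * dB m j
          + B j * ∑ i, (dL i j m * A i + Lx i j * dA i m)))
        = ∑ i, ∑ j, (Lx i j * A i * dB m j + B j * (dL i j m * A i + Lx i j * dA i m)) := by
      have h1 : (∑ j, ((∑ i, Lx i j * A i) * dB m j
            + B j * ∑ i, (dL i j m * A i + Lx i j * dA i m)))
          = ∑ j, ∑ i, (Lx i j * A i * dB m j + B j * (dL i j m * A i + Lx i j * dA i m)) :=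
        Finset.sum_congr rfl fun j _ => by
          rw [Finset.sum_mul, Finset.mul_sum, ← Finset.sum_add_distrib]
      rw [h1]; exact Finset.sum_comm
    have e2 : (∑ j, ((∑ i, Lx i j * B i) * dA m j
          + A j * ∑ i, (dL i j m * B i + Lx i j * dB i m)))
        = ∑ i, ∑ j, (Lx i j * B i * dA m j + A j * (dL i j m * B i + Lx i j * dB i m)) := by
      have h1 : (∑ j, ((∑ i, Lx i j * B i) * dA m j
            + A j * ∑ i, (dL i j m * B i + Lx i j * dB i m)))
          = ∑ j, ∑ i, (Lx i j * B i * dA m j + A j * (dL i j m * B i + Lx i j * dB i m)) :=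
        Finset.sum_congr rfl fun j _ => by
          rw [Finset.sum_mul, Finset.mul_sum, ← Finset.sum_add_distrib]
      rw [h1]; exact Finset.sum_comm
    rw [e1, e2, ← sub_eq_zero]
    simp only [← Finset.sum_sub_distrib]
    apply sum_antisym
    intro i j
    linear_combination (-(A i * B j + A j * B i)) * hdsk i j m
      + (-(A j * dB i m + A i * dB j m)) * hsk i j
  simp only [stepA]
  have eq1 : ∑ m, Lx m k * ∑ i, ∑ j,
        (Lx i j * A i * dB m j - Lx i j * B i * dA m j + dL i j m * A i * B j)
      = (∑ m, ∑ i, ∑ j, Lx i j * A i * (Lx m k * dB m j))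
        - (∑ m, ∑ i, ∑ j, Lx i j * B i * (Lx m k * dA m j))
        + ∑ m, ∑ i, ∑ j, Lx m k * dL i j m * A i * B j := by
    simp only [Finset.mul_sum, ← Finset.sum_sub_distrib, ← Finset.sum_add_distrib]
    exact Finset.sum_congr rfl fun m _ => Finset.sum_congr rfl fun i _ =>
      Finset.sum_congr rfl fun j _ => by ring
  have eq2 : (∑ j, ((∑ i, Lx i j * A i) * ∑ i, (dL i k j * B i + Lx i k * dB i j)
          - (∑ i, Lx i j * B i) * ∑ i, (dL i k j * A i + Lx i k * dA i j)))
      = (∑ j, ∑ i, ∑ p, Lx i j * A i * (dL p k j * B p))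
        + (∑ j, ∑ i, ∑ p, Lx i j * A i * (Lx p k * dB p j))
        - (∑ j, ∑ i, ∑ p, Lx i j * B i * (dL p k j * A p))
        - ∑ j, ∑ i, ∑ p, Lx i j * B i * (Lx p k * dA p j) := by
    simp only [Finset.sum_mul_sum, ← Finset.sum_sub_distrib, ← Finset.sum_add_distrib]
    exact Finset.sum_congr rfl fun j _ => Finset.sum_congr rfl fun i _ =>
      Finset.sum_congr rfl fun p _ => by ring
  have eq3 : (1 / 2 : ℝ) * ∑ i, ∑ j,
        (2 * ∑ l, (Lx l i * dL j k l + Lx l j * dL k i l + Lx l k * dL i j l)) * A i * B j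
      = (∑ i, ∑ j, ∑ l, Lx l i * dL j k l * A i * B j)
        + (∑ i, ∑ j, ∑ l, Lx l j * dL k i l * A i * B j)
        + ∑ i, ∑ j, ∑ l, Lx l k * dL i j l * A i * B j := by
    simp only [Finset.mul_sum, Finset.sum_mul, ← Finset.sum_add_distrib]
    exact Finset.sum_congr rfl fun i _ => Finset.sum_congr rfl fun j _ =>
      Finset.sum_congr rfl fun l _ => by ring
  rw [eq1, eq2, eq3]
  have m1 : (∑ m, ∑ i, ∑ j, Lx i j * A i * (Lx m k * dB m j))
      = ∑ j, ∑ i, ∑ p, Lx i j * A i * (Lx p k * dB p j) := by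
    rw [sum_rot3 (fun j i p => Lx i j * A i * (Lx p k * dB p j))]
    exact Finset.sum_congr rfl fun m _ => Finset.sum_comm
  have m2 : (∑ m, ∑ i, ∑ j, Lx i j * B i * (Lx m k * dA m j))
      = ∑ j, ∑ i, ∑ p, Lx i j * B i * (Lx p k * dA p j) := by
    rw [sum_rot3 (fun j i p => Lx i j * B i * (Lx p k * dA p j))]
    exact Finset.sum_congr rfl fun m _ => Finset.sum_comm
  have m3 : (∑ m, ∑ i, ∑ j, Lx m k * dL i j m * A i * B j)
      = ∑ i, ∑ j, ∑ l, Lx l k * dL i j l * A i * B j :=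
    (sum_rot3 (fun i j l => Lx l k * dL i j l * A i * B j)).symm
  have m4 : (∑ j, ∑ i, ∑ p, Lx i j * A i * (dL p k j * B p))
      + (∑ i, ∑ j, ∑ l, Lx l i * dL j k l * A i * B j) = 0 := by
    have r1 : (∑ j, ∑ i, ∑ p, Lx i j * A i * (dL p k j * B p))
        = ∑ a, ∑ b, ∑ c, Lx a b * A a * (dL c k b * B c) := Finset.sum_comm
    have q1 : (∑ i, ∑ j, ∑ l, Lx l i * dL j k l * A i * B j)
        = ∑ a, ∑ b, ∑ c, Lx b a * dL c k b * A a * B c :=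
      Finset.sum_congr rfl fun a _ => Finset.sum_comm
    rw [r1, q1]
    simp only [← Finset.sum_add_distrib]
    refine Finset.sum_eq_zero fun a _ => Finset.sum_eq_zero fun b _ =>
      Finset.sum_eq_zero fun c _ => ?_
    linear_combination (A a * (dL c k b * B c)) * hsk a b
  have m5 : (∑ j, ∑ i, ∑ p, Lx i j * B i * (dL p k j * A p))
      = ∑ i, ∑ j, ∑ l, Lx l j * dL k i l * A i * B j := by
    have r3 : (∑ j, ∑ i, ∑ p, Lx i j * B i * (dL p k j * A p))
        = ∑ a, ∑ b, ∑ c, Lx b c * B b * (dL a k c * A a) := by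
      rw [sum_rot3 (fun j i p => Lx i j * B i * (dL p k j * A p))]
      exact Finset.sum_congr rfl fun a _ => Finset.sum_comm
    rw [r3]
    refine Finset.sum_congr rfl fun a _ => Finset.sum_congr rfl fun b _ =>
      Finset.sum_congr rfl fun c _ => ?_
    linear_combination (B b * dL a k c * A a) * hsk b c + (- (Lx c b * A a * B b)) * hdsk a k c
  linarith [m1, m2, m3, m4, m5]

theorem statement2 {N : ℕ} (L : Fin N → Fin N → (Fin N → ℝ) → ℝ)
    (hL : ∀ i j, ContDiff ℝ (⊤ : ℕ∞) (L i j))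
    (hskew : ∀ i j x, L i j x = - L j i x)
    (α β : Fin N → (Fin N → ℝ) → ℝ)
    (hα : ∀ i, ContDiff ℝ (⊤ : ℕ∞) (α i)) (hβ : ∀ i, ContDiff ℝ (⊤ : ℕ∞) (β i))
    (k : Fin N) (x : Fin N → ℝ) :
    sharp L
      (fun i => fun y => lieOneForm (sharp L α) β i y - lieOneForm (sharp L β) α i y
        - pd (biEval L α β) i y) k x
    = lieVF (sharp L α) (sharp L β) k x
      + (1/2) * ∑ i, ∑ j, schouten L i j k x * α i x * β j x := by
  have hdskew : ∀ (i j m : Fin N), pd (L i j) m x = - pd (L j i) m x := by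
    intro i j m
    have h : L i j = fun y => - L j i y := funext fun y => hskew i j y
    rw [h]
    simp [pd, fderiv_neg]
  simp only [sharp, lieOneForm, lieVF, schouten, pd_sharp L hL α hα, pd_sharp L hL β hβ,
    pd_biEval L hL α β hα hβ]
  exact key (fun i j => L i j x) (fun i j m => pd (L i j) m x) (fun i => α i x) (fun i => β i x)
    (fun i m => pd (α i) m x) (fun i m => pd (β i) m x) (fun i j => hskew i j x) hdskew k
end
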